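/- arXiv:1607.00886 — 2 statements merged into one kernel-verified Lean document; each statement's English description precedes it below -/
import Mathlib

section
/- Let A and B be subsets of a partially ordered set (Ω, ≽). If every a ∈ A is dominated by some element of Par(A) (i.e., for every a ∈ A there exists m ∈ Par(A) with m ≽ a) and Par(A) ⊆ B, then Par(A) = Par(A ∩ B). -/
/-- The Pareto optimal set of `X` in a partially ordered set: the elements of `X`
not strictly dominated by any other element of `X` (here `y ≽ x` is `x ≤ y`). -/
def Par {Ω : Type*} [PartialOrder Ω] (X : Set Ω) : Set Ω :=
  {x ∈ X | ∀ y ∈ X, x ≤ y → y = x}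

/-- if every `a ∈ A` is dominated by an element of `Par(A)` and
`Par(A) ⊆ B`, then `Par(A) = Par(A ∩ B)`. -/
theorem par_eq_par_inter {Ω : Type*} [PartialOrder Ω] (A B : Set Ω)
    (hdom : ∀ a ∈ A, ∃ m ∈ Par A, a ≤ m) (h : Par A ⊆ B) :
    Par A = Par (A ∩ B) := by
  ext x
  constructor
  · rintro ⟨hxA, hmax⟩
    exact ⟨⟨hxA, h ⟨hxA, hmax⟩⟩, fun y hy hle => hmax y hy.1 hle⟩
  · rintro ⟨⟨hxA, _⟩, hmax⟩
    obtain ⟨m, hm, hxm⟩ := hdom x hxA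
    have : m = x := hmax m ⟨hm.1, h hm⟩ hxm
    exact this ▸ hm
end

section
/- Let (Ω, ≽) be a partially ordered set and X_1, …, X_K subsets such that for every k, every x ∈ X_k, and every y ∈ ⋃_{l=1}^K X_l, if y ≽ x then y ∈ X_k. Then Par(⋃_{k=1}^K X_k) = ⋃_{k=1}^K Par(X_k). -/
/-- if each `X k` is upward closed within the union `⋃ l, X l`, then
the Pareto set of the union is the union of the Pareto sets. -/
theorem par_union_eq_union_par {Ω : Type*} [PartialOrder Ω] (K : ℕ)
    (X : Fin K → Set Ω)
    (h : ∀ k, ∀ x ∈ X k, ∀ y ∈ ⋃ l, X l, x ≤ y → y ∈ X k) :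
    Par (⋃ k, X k) = ⋃ k, Par (X k) := by
  ext x
  simp only [Par, Set.mem_setOf_eq, Set.mem_iUnion]
  constructor
  · rintro ⟨⟨k, hxk⟩, hmax⟩
    exact ⟨k, hxk, fun y hy hxy => hmax y ⟨k, hy⟩ hxy⟩
  · rintro ⟨k, hxk, hmax⟩
    exact ⟨⟨k, hxk⟩, fun y hy hxy =>
      hmax y (h k x hxk y (Set.mem_iUnion.mpr hy) hxy) hxy⟩
end
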